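/- Let φ ∈ UCP^{G_τ}(A, B(H)). Then φ is a C*-extreme point of UCP^{G_τ}(A, B(H)) if and only if: for every G-invariant completely positive map ψ : A → B(H) with ψ ≤ φ (i.e., φ − ψ completely positive and G-invariant) such that ψ(1_A) is invertible, there exists an invertible operator Z ∈ B(H) such that ψ(a) = Z* φ(a) Z for all a ∈ A. -/

import Mathlib

/-!
If `φ` is C*-extreme and `ψ ≤ φ` with `ψ(1)` invertible, split `φ = ψ/2 + (φ - ψ/2)`. Both
summands are completely positive, `G`-invariant and invertible at `1` (the second dominates
`ψ(1)/2`), so each is `T* φᵢ T` with `φᵢ` unital and `T` the square root of its value at `1`.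
This is a proper C*-convex decomposition of `φ`, hence `φ₁ = U* φ U` for a unitary `U`, and
`ψ = Z* φ Z` with `Z = √2 U T₁`.

Conversely, a summand `Tᵢ* φᵢ Tᵢ` of a proper decomposition is dominated by `φ` and invertible
at `1`, so it equals `Z* φ Z`; then `V = Z Tᵢ⁻¹` gives `φᵢ = V* φ V`, and since `φ` and `φᵢ` are
unital, `V* V = 1`, so the invertible `V` is unitary.
-/

open scoped ComplexOrder

noncomputable section

variable {G : Type} [Group G]
variable {A : Type} [Ring A] [StarRing A] [Algebra ℂ A]
variable {H : Type} [NormedAddCommGroup H] [InnerProductSpace ℂ H] [CompleteSpace H]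

/-- Complete positivity of a linear map into `B(H)`. -/
def IsCPMap (φ : A →ₗ[ℂ] (H →L[ℂ] H)) : Prop :=
  ∀ (n : ℕ) (a : Fin n → A) (h : Fin n → H),
    0 ≤ ∑ i, ∑ j, (inner ℂ ((φ (star (a i) * a j)) (h j)) (h i) : ℂ)

/-- Unital completely positive map. -/
def IsUCPMap (φ : A →ₗ[ℂ] (H →L[ℂ] H)) : Prop :=
  IsCPMap φ ∧ φ 1 = 1

/-- `G`-invariance of a map with respect to an action `τ` of `G` on `A`
by `*`-automorphisms. -/
def IsGInvariant (τ : G → (A ≃⋆ₐ[ℂ] A)) (φ : A →ₗ[ℂ] (H →L[ℂ] H)) : Prop :=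
  ∀ (g : G) (a : A), φ (τ g a) = φ a

/-- The set `UCP^{G_τ}(A, B(H))` of `G`-invariant unital completely positive maps. -/
def UCPG (τ : G → (A ≃⋆ₐ[ℂ] A)) : Set (A →ₗ[ℂ] (H →L[ℂ] H)) :=
  {φ | IsUCPMap φ ∧ IsGInvariant τ φ}

/-- Unitary equivalence of maps into `B(H)`: `ψ = U* φ U`. -/
def UnitarilyEquiv (φ ψ : A →ₗ[ℂ] (H →L[ℂ] H)) : Prop :=
  ∃ U ∈ unitary (H →L[ℂ] H), ∀ a, ψ a = star U * φ a * U

/-- `φ` is a C*-extreme point of `S`: every proper C*-convex decomposition of `φ`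
into members of `S` has all components unitarily equivalent to `φ`. -/
def IsCStarExtreme (S : Set (A →ₗ[ℂ] (H →L[ℂ] H))) (φ : A →ₗ[ℂ] (H →L[ℂ] H)) : Prop :=
  φ ∈ S ∧ ∀ (n : ℕ) (ψ : Fin n → (A →ₗ[ℂ] (H →L[ℂ] H))) (T : Fin n → (H →L[ℂ] H)),
    (∀ i, ψ i ∈ S) → (∀ i, IsUnit (T i)) →
    (∑ i, star (T i) * T i) = 1 →
    (∀ a, φ a = ∑ i, star (T i) * (ψ i a) * T i) →
    ∀ i, UnitarilyEquiv φ (ψ i)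

section

variable {B : Type} [Ring B] [Algebra ℂ B]
variable {E : Type} [NormedAddCommGroup E] [InnerProductSpace ℂ E]

lemma ContinuousLinearMap.nonneg_of_forall_inner_nonneg {f : E →L[ℂ] E}
    (hf : ∀ x, 0 ≤ inner ℂ (f x) x) : 0 ≤ f := by
  rw [ContinuousLinearMap.nonneg_iff_isPositive, ContinuousLinearMap.isPositive_iff_complex]
  intro x
  obtain ⟨hre, him⟩ := Complex.nonneg_iff.mp (hf x)
  exact ⟨Complex.ext rfl (by simp [← him]), hre⟩

section ConjMap

variable [CompleteSpace E]

def conjMap (S : E →L[ℂ] E) (χ : B →ₗ[ℂ] (E →L[ℂ] E)) : B →ₗ[ℂ] (E →L[ℂ] E) where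
  toFun a := star S * χ a * S
  map_add' a b := by simp [mul_add, add_mul]
  map_smul' c a := by simp

@[simp]
lemma conjMap_apply (S : E →L[ℂ] E) (χ : B →ₗ[ℂ] (E →L[ℂ] E)) (a : B) :
    conjMap S χ a = star S * χ a * S := rfl

lemma conjMap_one (χ : B →ₗ[ℂ] (E →L[ℂ] E)) : conjMap 1 χ = χ := by
  ext1 a; simp

lemma conjMap_conjMap (R S : E →L[ℂ] E) (χ : B →ₗ[ℂ] (E →L[ℂ] E)) :
    conjMap S (conjMap R χ) = conjMap (R * S) χ := by
  ext1 a; simp [star_mul, mul_assoc]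

lemma conjMap_smul (c : ℂ) (S : E →L[ℂ] E) (χ : B →ₗ[ℂ] (E →L[ℂ] E)) :
    conjMap (c • S) χ = (star c * c) • conjMap S χ := by
  ext1 a; simp [star_smul, smul_smul, mul_comm]

@[simp]
lemma conjMap_inv_conjMap (u : (E →L[ℂ] E)ˣ) (χ : B →ₗ[ℂ] (E →L[ℂ] E)) :
    conjMap ↑u⁻¹ (conjMap ↑u χ) = χ := by
  rw [conjMap_conjMap, Units.mul_inv, conjMap_one]

@[simp]
lemma conjMap_conjMap_inv (u : (E →L[ℂ] E)ˣ) (χ : B →ₗ[ℂ] (E →L[ℂ] E)) :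
    conjMap ↑u (conjMap ↑u⁻¹ χ) = χ := by
  rw [conjMap_conjMap, Units.inv_mul, conjMap_one]

lemma unitarilyEquiv_of_isUnit {φ ψ : B →ₗ[ℂ] (E →L[ℂ] E)} {V : E →L[ℂ] E} (hV : IsUnit V)
    (hφ : φ 1 = 1) (hψ : ψ 1 = 1) (h : ψ = conjMap V φ) : UnitarilyEquiv φ ψ := by
  refine ⟨V, hV.mem_unitary_of_star_mul_self ?_, fun a => by rw [h, conjMap_apply]⟩
  simpa [hφ, hψ] using (LinearMap.congr_fun h 1).symm

end ConjMap

namespace IsCPMap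

variable [StarRing B] {χ χ' : B →ₗ[ℂ] (E →L[ℂ] E)}

lemma zero : IsCPMap (0 : B →ₗ[ℂ] (E →L[ℂ] E)) := fun n a h => by simp

lemma add (hχ : IsCPMap χ) (hχ' : IsCPMap χ') : IsCPMap (χ + χ') := fun n a h => by
  simpa [inner_add_left, Finset.sum_add_distrib] using add_nonneg (hχ n a h) (hχ' n a h)

lemma sum {ι : Type*} (s : Finset ι) {χ : ι → B →ₗ[ℂ] (E →L[ℂ] E)}
    (h : ∀ i ∈ s, IsCPMap (χ i)) : IsCPMap (∑ i ∈ s, χ i) :=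
  Finset.sum_induction _ IsCPMap (fun _ _ => add) zero h

lemma ofReal_smul (hχ : IsCPMap χ) {r : ℝ} (hr : 0 ≤ r) : IsCPMap ((r : ℂ) • χ) :=
  fun n a h => by
    simpa [inner_smul_left, Finset.mul_sum] using
      mul_nonneg (Complex.zero_le_real.mpr hr) (hχ n a h)

lemma conj [CompleteSpace E] (hχ : IsCPMap χ) (S : E →L[ℂ] E) : IsCPMap (conjMap S χ) :=
  fun n a h => by
    simpa [ContinuousLinearMap.star_eq_adjoint, ContinuousLinearMap.adjoint_inner_left] using
      hχ n a (fun k => S (h k))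

lemma map_one_nonneg (hχ : IsCPMap χ) : 0 ≤ χ 1 :=
  ContinuousLinearMap.nonneg_of_forall_inner_nonneg fun x => by
    simpa using hχ 1 (fun _ => 1) (fun _ => x)

end IsCPMap

namespace IsGInvariant

variable [StarRing B] {Γ : Type} {τ : Γ → (B ≃⋆ₐ[ℂ] B)} {χ χ' : B →ₗ[ℂ] (E →L[ℂ] E)}

lemma add (hχ : IsGInvariant τ χ) (hχ' : IsGInvariant τ χ') : IsGInvariant τ (χ + χ') :=
  fun g a => by simp [hχ g a, hχ' g a]

lemma sub (hχ : IsGInvariant τ χ) (hχ' : IsGInvariant τ χ') : IsGInvariant τ (χ - χ') :=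
  fun g a => by simp [hχ g a, hχ' g a]

lemma smul (hχ : IsGInvariant τ χ) (c : ℂ) : IsGInvariant τ (c • χ) :=
  fun g a => by simp [hχ g a]

lemma conj [CompleteSpace E] (hχ : IsGInvariant τ χ) (S : E →L[ℂ] E) :
    IsGInvariant τ (conjMap S χ) :=
  fun g a => by simp [hχ g a]

end IsGInvariant

variable [StarRing B] [CompleteSpace E] {Γ : Type} {τ : Γ → (B ≃⋆ₐ[ℂ] B)}

lemma exists_conjMap_eq_of_isUnit_map_one {χ : B →ₗ[ℂ] (E →L[ℂ] E)} (hχ : IsCPMap χ)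
    (hχG : IsGInvariant τ χ) (hχ1 : IsUnit (χ 1)) :
    ∃ T : E →L[ℂ] E, IsUnit T ∧ ∃ φ ∈ UCPG τ, χ = conjMap T φ := by
  have hT : IsUnit (CFC.sqrt (χ 1)) := (CFC.isUnit_sqrt_iff _ hχ.map_one_nonneg).mpr hχ1
  have hTT : star (CFC.sqrt (χ 1)) * CFC.sqrt (χ 1) = χ 1 := by
    rw [(CFC.sqrt_nonneg (χ 1)).isSelfAdjoint.star_eq, CFC.sqrt_mul_sqrt_self _ hχ.map_one_nonneg]
  lift CFC.sqrt (χ 1) to (E →L[ℂ] E)ˣ using hT with T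
  refine ⟨T, T.isUnit, conjMap ↑T⁻¹ χ, ⟨⟨hχ.conj _, ?_⟩, hχG.conj _⟩, ?_⟩
  · rw [conjMap_apply, ← hTT, ← mul_assoc, ← star_mul, mul_assoc, Units.mul_inv, star_one,
      one_mul]
  · rw [conjMap_conjMap_inv]

lemma IsCStarExtreme.exists_conjMap_eq_of_add_eq {φ χ₁ χ₂ : B →ₗ[ℂ] (E →L[ℂ] E)}
    (hext : IsCStarExtreme (UCPG τ) φ) (h₁ : IsCPMap χ₁) (h₁G : IsGInvariant τ χ₁)
    (h₁1 : IsUnit (χ₁ 1)) (h₂ : IsCPMap χ₂) (h₂G : IsGInvariant τ χ₂) (h₂1 : IsUnit (χ₂ 1))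
    (hsum : χ₁ + χ₂ = φ) : ∃ Z : E →L[ℂ] E, IsUnit Z ∧ χ₁ = conjMap Z φ := by
  obtain ⟨T₁, hT₁, φ₁, hφ₁, rfl⟩ := exists_conjMap_eq_of_isUnit_map_one h₁ h₁G h₁1
  obtain ⟨T₂, hT₂, φ₂, hφ₂, rfl⟩ := exists_conjMap_eq_of_isUnit_map_one h₂ h₂G h₂1
  have hdec (a : B) : φ a = ∑ i, star (![T₁, T₂] i) * ![φ₁, φ₂] i a * ![T₁, T₂] i := by
    simp [← hsum]
  have hunit : ∑ i, star (![T₁, T₂] i) * ![T₁, T₂] i = 1 := by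
    simpa [hext.1.1.2, hφ₁.1.2, hφ₂.1.2] using (hdec 1).symm
  obtain ⟨U, hU, hφ₁U⟩ := hext.2 2 ![φ₁, φ₂] ![T₁, T₂] (Fin.forall_fin_two.2 ⟨hφ₁, hφ₂⟩)
    (Fin.forall_fin_two.2 ⟨hT₁, hT₂⟩) hunit hdec 0
  refine ⟨U * T₁, (Unitary.isUnit_coe (U := ⟨U, hU⟩)).mul hT₁, ?_⟩
  rw [← conjMap_conjMap]
  exact congrArg _ (LinearMap.ext hφ₁U)

lemma IsCStarExtreme.exists_isUnit_conj_of_le {φ ψ : B →ₗ[ℂ] (E →L[ℂ] E)}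
    (hext : IsCStarExtreme (UCPG τ) φ) (hψ : IsCPMap ψ) (hψG : IsGInvariant τ ψ)
    (hφψ : IsCPMap (φ - ψ)) (hφψG : IsGInvariant τ (φ - ψ)) (hψ1 : IsUnit (ψ 1)) :
    ∃ Z : E →L[ℂ] E, IsUnit Z ∧ ∀ a, ψ a = star Z * φ a * Z := by
  set χ : B →ₗ[ℂ] (E →L[ℂ] E) := ((2⁻¹ : ℝ) : ℂ) • ψ with hχ
  have hχCP : IsCPMap χ := hψ.ofReal_smul (by norm_num)
  have hχpos : IsStrictlyPositive (χ 1) := by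
    rw [hχ, LinearMap.smul_apply, Complex.coe_smul]
    exact (hψ1.isStrictlyPositive hψ.map_one_nonneg).smul (by norm_num)
  obtain ⟨Z, hZ, hχZ⟩ := hext.exists_conjMap_eq_of_add_eq (χ₂ := (φ - ψ) + χ) hχCP
    (hψG.smul _) hχpos.isUnit (hφψ.add hχCP) (hφψG.add (hψG.smul _))
    (IsStrictlyPositive.nonneg_add hφψ.map_one_nonneg hχpos).isUnit
    (by simp only [hχ, Complex.ofReal_inv, Complex.ofReal_ofNat]; module)
  set c : ℂ := ((Real.sqrt 2 : ℝ) : ℂ) with hc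
  have hcc : star c * c = 2 := by
    rw [hc, Complex.star_def, Complex.conj_ofReal, ← Complex.ofReal_mul,
      Real.mul_self_sqrt zero_le_two, Complex.ofReal_ofNat]
  have hc0 : c ≠ 0 := by simp [hc]
  refine ⟨c • Z, by simpa [Units.smul_def] using hZ.smul (Units.mk0 c hc0), fun a => ?_⟩
  rw [← conjMap_apply, conjMap_smul, hcc, ← hχZ, hχ, smul_smul]
  norm_num

lemma isCStarExtreme_of_forall_exists_isUnit_conj {φ : B →ₗ[ℂ] (E →L[ℂ] E)} (hφ : φ ∈ UCPG τ)
    (hRN : ∀ ψ : B →ₗ[ℂ] (E →L[ℂ] E), IsCPMap ψ → IsGInvariant τ ψ → IsCPMap (φ - ψ) →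
      IsGInvariant τ (φ - ψ) → IsUnit (ψ 1) →
      ∃ Z : E →L[ℂ] E, IsUnit Z ∧ ∀ a, ψ a = star Z * φ a * Z) :
    IsCStarExtreme (UCPG τ) φ := by
  refine ⟨hφ, fun n ψ T hψ hT _ hdec i => ?_⟩
  obtain ⟨t, ht⟩ := hT i
  have hrest : φ - conjMap t (ψ i) = ∑ j ∈ Finset.univ.erase i, conjMap (T j) (ψ j) := by
    rw [Finset.sum_erase_eq_sub (Finset.mem_univ i), ht]
    congr 1
    ext1 a
    simp [hdec a]
  have hψ1 : conjMap t (ψ i) 1 = star ↑t * ↑t := by simp [(hψ i).1.2]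
  obtain ⟨Z, hZ, hZeq⟩ := hRN (conjMap t (ψ i)) ((hψ i).1.1.conj _) ((hψ i).2.conj _)
    (hrest ▸ IsCPMap.sum _ fun j _ => (hψ j).1.1.conj _) (hφ.2.sub ((hψ i).2.conj _))
    (hψ1 ▸ t.isUnit.star.mul t.isUnit)
  refine unitarilyEquiv_of_isUnit (hZ.mul t⁻¹.isUnit) hφ.1.2 (hψ i).1.2 ?_
  have hZeq' : conjMap t (ψ i) = conjMap Z φ := LinearMap.ext hZeq
  rw [← conjMap_inv_conjMap t (ψ i), hZeq', conjMap_conjMap]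

end

/-- `φ ∈ UCP^{G_τ}(A, B(H))` is a C*-extreme point iff every
`G`-invariant completely positive map `ψ ≤ φ` with `ψ(1)` invertible is of the form
`ψ = Z* φ Z` for an invertible `Z ∈ B(H)`. -/
theorem cstarExtreme_iff_radonNikodym
    (τ : G → (A ≃⋆ₐ[ℂ] A)) (φ : A →ₗ[ℂ] (H →L[ℂ] H)) (hφ : φ ∈ UCPG τ) :
    IsCStarExtreme (UCPG τ) φ ↔
      ∀ ψ : A →ₗ[ℂ] (H →L[ℂ] H),
        IsCPMap ψ → IsGInvariant τ ψ →
        IsCPMap (φ - ψ) → IsGInvariant τ (φ - ψ) →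
        IsUnit (ψ 1) →
        ∃ Z : H →L[ℂ] H, IsUnit Z ∧ ∀ a : A, ψ a = star Z * φ a * Z :=
  ⟨fun hext _ hψ hψG hφψ hφψG hψ1 => hext.exists_isUnit_conj_of_le hψ hψG hφψ hφψG hψ1,
    isCStarExtreme_of_forall_exists_isUnit_conj hφ⟩
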